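/- If a 2×4 real matrix M has rows q and q', and P_{ij} denotes the tropical 2×2 minor min(q_i + q'_j, q_j + q'_i) for 0 ≤ i < j ≤ 3, then the vector P satisfies the tropical Plücker relation: the minimum of P01+P23, P02+P13, P03+P12 is attained at least twice. -/
import Mathlib

/-- The minimum of three reals is attained at least twice. -/
def MinAttainedTwice (x y z : ℝ) : Prop :=
  (x = y ∧ x ≤ z) ∨ (x = z ∧ x ≤ y) ∨ (y = z ∧ y ≤ x)

/-- The tropical 2×2 minor of the matrix with rows q, q' at columns i < j. -/
def tropMinor (q q' : Fin 4 → ℝ) (i j : Fin 4) : ℝ :=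
  min (q i + q' j) (q j + q' i)

set_option maxHeartbeats 1000000 in
lemma key (t0 t1 t2 t3 : ℝ) :
    MinAttainedTwice (min t0 t1 + min t2 t3) (min t0 t2 + min t1 t3)
      (min t0 t3 + min t1 t2) := by
  unfold MinAttainedTwice
  simp only [min_def]
  rcases le_total t0 t1 with h1 | h1 <;>
  rcases le_total t2 t3 with h2 | h2 <;>
  rcases le_total t0 t2 with h3 | h3 <;>
  rcases le_total t1 t3 with h4 | h4 <;>
  rcases le_total t0 t3 with h5 | h5 <;>
  rcases le_total t1 t2 with h6 | h6 <;>
  split_ifs <;>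
  first
    | exact Or.inl ⟨by linarith, by linarith⟩
    | exact Or.inr (Or.inl ⟨by linarith, by linarith⟩)
    | exact Or.inr (Or.inr ⟨by linarith, by linarith⟩)

lemma shift {x y z : ℝ} (c : ℝ) (h : MinAttainedTwice x y z) :
    MinAttainedTwice (x + c) (y + c) (z + c) := by
  unfold MinAttainedTwice at *
  rcases h with ⟨h1, h2⟩ | ⟨h1, h2⟩ | ⟨h1, h2⟩ <;> [left; (right; left); (right; right)] <;>
    constructor <;> linarith

/-- The tropical 2×2 minors of any 2×4 real matrix satisfy the tropical
Plücker relation: the minimum of P01+P23, P02+P13, P03+P12 is attained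
at least twice. -/
theorem stmt_1 (q q' : Fin 4 → ℝ) :
    MinAttainedTwice
      (tropMinor q q' 0 1 + tropMinor q q' 2 3)
      (tropMinor q q' 0 2 + tropMinor q q' 1 3)
      (tropMinor q q' 0 3 + tropMinor q q' 1 2) := by
  have h := shift (q' 0 + q' 1 + q' 2 + q' 3)
    (key (q 0 - q' 0) (q 1 - q' 1) (q 2 - q' 2) (q 3 - q' 3))
  have e1 : tropMinor q q' 0 1 + tropMinor q q' 2 3 =
      min (q 0 - q' 0) (q 1 - q' 1) + min (q 2 - q' 2) (q 3 - q' 3) +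
        (q' 0 + q' 1 + q' 2 + q' 3) := by
    simp only [tropMinor, min_def]; split_ifs <;> linarith
  have e2 : tropMinor q q' 0 2 + tropMinor q q' 1 3 =
      min (q 0 - q' 0) (q 2 - q' 2) + min (q 1 - q' 1) (q 3 - q' 3) +
        (q' 0 + q' 1 + q' 2 + q' 3) := by
    simp only [tropMinor, min_def]; split_ifs <;> linarith
  have e3 : tropMinor q q' 0 3 + tropMinor q q' 1 2 =
      min (q 0 - q' 0) (q 3 - q' 3) + min (q 1 - q' 1) (q 2 - q' 2) +
        (q' 0 + q' 1 + q' 2 + q' 3) := by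
    simp only [tropMinor, min_def]; split_ifs <;> linarith
  rw [e1, e2, e3]
  exact h
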